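/- arXiv:0906.5242 — 2 statements merged into one kernel-verified Lean document; each statement's English description precedes it below -/
import Mathlib

section
/- There exist smooth functions f, g : (-1-ε, 1+ε) → ℝ (for any ε > 0) such that: f is even with f(t) = e^{t+1} for t in a neighbourhood of (-1-ε, -1]; g is odd with g(t) = 1 for t in a neighbourhood of (-1-ε, -1]; and f'(t)g(t) - f(t)g'(t) > 0 for all t in (-1-ε, 1+ε). -/
open Set Real

/-! The Wronskian `f'g - fg'` of `f` and `g = h f` is `-f² h'`, so it suffices to take an even
`f > 0` extending `e^{t+1}` and an odd strictly decreasing `h` extending `e^{-(t+1)}`. Both are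
glued from their left pieces and the mirror images by an antitone cutoff `ψ` with `ψ = 1` on
`(-∞, 0]` and `ψ = 0` on `[1/2, ∞)`: `f(t) = ψ(t)e^{t+1} + ψ(-t)e^{1-t}` and
`h(t) = ψ(t)e^{-(t+1)} - ψ(-t)e^{t-1}`. Every term of `h'` is `≤ 0`, and the one coming from
whichever of `±t` is `≤ 0` is `< 0`. -/

noncomputable section

theorem deriv_mul_sub_mul_deriv_mul {f h : ℝ → ℝ} {t : ℝ} (hf : DifferentiableAt ℝ f t)
    (hh : DifferentiableAt ℝ h t) :
    deriv f t * (h t * f t) - f t * deriv (fun s => h s * f s) t = -(f t ^ 2 * deriv h t) := by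
  rw [deriv_fun_mul hh hf]
  ring

theorem hasDerivAt_sub_comp_neg {u u' : ℝ → ℝ} (hu : ∀ s, HasDerivAt u (u' s) s) (t : ℝ) :
    HasDerivAt (fun s => u s - u (-s)) (u' t + u' (-t)) t := by
  have hneg : HasDerivAt (fun s => u (-s)) (u' (-t) * -1) t :=
    (hu (-t)).comp t (hasDerivAt_neg t)
  simpa using (hu t).fun_sub hneg

def cutoff (s : ℝ) : ℝ := smoothTransition (1 - 2 * s)

theorem contDiff_cutoff {n : ℕ∞} : ContDiff ℝ n cutoff :=
  smoothTransition.contDiff.comp (contDiff_const.sub (contDiff_const.mul contDiff_id))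

theorem antitone_cutoff : Antitone cutoff := fun _ _ hst =>
  smoothTransition.monotone (by linarith)

theorem cutoff_nonneg (s : ℝ) : 0 ≤ cutoff s := smoothTransition.nonneg _

theorem cutoff_of_nonpos {s : ℝ} (hs : s ≤ 0) : cutoff s = 1 :=
  smoothTransition.one_of_one_le (by linarith)

theorem cutoff_of_one_half_le {s : ℝ} (hs : 1 / 2 ≤ s) : cutoff s = 0 :=
  smoothTransition.zero_of_nonpos (by linarith)

def evenExp (t : ℝ) : ℝ := cutoff t * exp (t + 1) + cutoff (-t) * exp (-t + 1)

def cutoffExpNeg (s : ℝ) : ℝ := cutoff s * exp (-(s + 1))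

def oddExpNeg (t : ℝ) : ℝ := cutoffExpNeg t - cutoffExpNeg (-t)

theorem contDiff_evenExp {n : ℕ∞} : ContDiff ℝ n evenExp := by
  have := contDiff_cutoff (n := n)
  unfold evenExp
  fun_prop

theorem contDiff_oddExpNeg {n : ℕ∞} : ContDiff ℝ n oddExpNeg := by
  have := contDiff_cutoff (n := n)
  unfold oddExpNeg cutoffExpNeg
  fun_prop

theorem evenExp_neg (t : ℝ) : evenExp (-t) = evenExp t := by
  rw [evenExp, evenExp, neg_neg, add_comm]

theorem oddExpNeg_neg (t : ℝ) : oddExpNeg (-t) = -oddExpNeg t := by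
  rw [oddExpNeg, oddExpNeg, neg_neg, neg_sub]

theorem evenExp_pos (t : ℝ) : 0 < evenExp t := by
  have of_nonpos : ∀ s ≤ 0, 0 < evenExp s := fun s hs => by
    rw [evenExp, cutoff_of_nonpos hs]
    positivity [cutoff_nonneg (-s)]
  rcases le_total t 0 with ht | ht
  · exact of_nonpos t ht
  · exact evenExp_neg t ▸ of_nonpos (-t) (neg_nonpos.mpr ht)

theorem hasDerivAt_cutoffExpNeg (s : ℝ) :
    HasDerivAt cutoffExpNeg ((deriv cutoff s - cutoff s) * exp (-(s + 1))) s := by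
  have hcut : HasDerivAt cutoff (deriv cutoff s) s :=
    (contDiff_cutoff (n := 1).differentiable one_ne_zero s).hasDerivAt
  have hexp : HasDerivAt (fun s => exp (-(s + 1))) (-exp (-(s + 1))) s := by
    simpa using ((hasDerivAt_id s).add_const 1).neg.exp
  exact (hcut.fun_mul hexp).congr_deriv (by ring)

theorem deriv_oddExpNeg_neg (t : ℝ) : deriv oddExpNeg t < 0 := by
  let v' (s : ℝ) : ℝ := (deriv cutoff s - cutoff s) * exp (-(s + 1))
  have hv'_nonpos : ∀ s, v' s ≤ 0 := fun s =>
    mul_nonpos_of_nonpos_of_nonneg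
      (by linarith [antitone_cutoff.deriv_nonpos (x := s), cutoff_nonneg s]) (exp_pos _).le
  have hv'_neg : ∀ s ≤ 0, v' s < 0 := fun s hs =>
    mul_neg_of_neg_of_pos
      (by linarith [antitone_cutoff.deriv_nonpos (x := s), cutoff_of_nonpos hs]) (exp_pos _)
  have hderiv : HasDerivAt oddExpNeg (v' t + v' (-t)) t :=
    hasDerivAt_sub_comp_neg hasDerivAt_cutoffExpNeg t
  rw [hderiv.deriv]
  rcases le_total t 0 with ht | ht
  · linarith [hv'_neg t ht, hv'_nonpos (-t)]
  · linarith [hv'_nonpos t, hv'_neg (-t) (neg_nonpos.mpr ht)]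

theorem evenExp_of_le {t : ℝ} (ht : t ≤ -(1 / 2)) : evenExp t = exp (t + 1) := by
  rw [evenExp, cutoff_of_nonpos (by linarith), cutoff_of_one_half_le (by linarith)]
  ring

theorem oddExpNeg_mul_evenExp_of_le {t : ℝ} (ht : t ≤ -(1 / 2)) :
    oddExpNeg t * evenExp t = 1 := by
  rw [oddExpNeg, cutoffExpNeg, cutoffExpNeg, evenExp_of_le ht,
    cutoff_of_nonpos (by linarith), cutoff_of_one_half_le (by linarith)]
  simp [← exp_add]

theorem stmt0_general (ε : ℝ) :
    ∃ f g : ℝ → ℝ,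
      ContDiff ℝ (⊤ : ℕ∞) f ∧ ContDiff ℝ (⊤ : ℕ∞) g ∧
      (∀ t ∈ Ioo (-1 - ε) (1 + ε), f (-t) = f t) ∧
      (∀ t ∈ Ioo (-1 - ε) (1 + ε), g (-t) = - g t) ∧
      (∃ δ > 0, ∀ t ∈ Ioo (-1 - ε) (-1 + δ), f t = Real.exp (t + 1) ∧ g t = 1) ∧
      (∀ t ∈ Ioo (-1 - ε) (1 + ε), deriv f t * g t - f t * deriv g t > 0) := by
  refine ⟨evenExp, fun t => oddExpNeg t * evenExp t, contDiff_evenExp,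
    contDiff_oddExpNeg.mul contDiff_evenExp, fun t _ => evenExp_neg t,
    fun t _ => by simp only [oddExpNeg_neg, evenExp_neg, neg_mul],
    ⟨1 / 2, one_half_pos, fun t ht => ?_⟩, fun t _ => ?_⟩
  · have ht' : t ≤ -(1 / 2) := by linarith [ht.2]
    exact ⟨evenExp_of_le ht', oddExpNeg_mul_evenExp_of_le ht'⟩
  · rw [deriv_mul_sub_mul_deriv_mul (contDiff_evenExp (n := 1).differentiable one_ne_zero t)
      (contDiff_oddExpNeg (n := 1).differentiable one_ne_zero t)]
    exact neg_pos.mpr (mul_neg_of_pos_of_neg (pow_pos (evenExp_pos t) 2) (deriv_oddExpNeg_neg t))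

/-- For any ε > 0 there exist smooth functions `f, g : ℝ → ℝ`
(considered on the interval `(-1-ε, 1+ε)`) such that `f` is even, `g` is odd,
`f(t) = e^{t+1}` and `g(t) = 1` on a neighbourhood of `(-1-ε, -1]` inside the interval,
and `f'g - fg' > 0` on all of `(-1-ε, 1+ε)`. -/
theorem stmt0 (ε : ℝ) (hε : 0 < ε) :
    ∃ f g : ℝ → ℝ,
      ContDiff ℝ (⊤ : ℕ∞) f ∧ ContDiff ℝ (⊤ : ℕ∞) g ∧
      (∀ t ∈ Ioo (-1 - ε) (1 + ε), f (-t) = f t) ∧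
      (∀ t ∈ Ioo (-1 - ε) (1 + ε), g (-t) = - g t) ∧
      (∃ δ > 0, ∀ t ∈ Ioo (-1 - ε) (-1 + δ), f t = Real.exp (t + 1) ∧ g t = 1) ∧
      (∀ t ∈ Ioo (-1 - ε) (1 + ε), deriv f t * g t - f t * deriv g t > 0) :=
  stmt0_general ε
end
end

section
/- Let π : M → B be a principal S¹-bundle over a closed oriented 2n-dimensional manifold B, let ω be a symplectic form on B, and let α be a connection 1-form on M (invariant and normalised) with dα = π*ω. Then α is a contact form on M, i.e. α ∧ (dα)^n is nowhere zero. -/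
/-! **Statement 6.** Let `π : M → B` be a principal `S¹`-bundle over a closed oriented
`2n`-manifold `B`, `ω` a symplectic form on `B`, and `α` a connection 1-form
(invariant and normalised) with `dα = π*ω`. Then `α` is a contact form on `M`.

We formalise this in local coordinates: in a local trivialisation with gauge `a`
(a 1-form on the base), the invariant normalised connection form is
`α = dθ + π*a` on `B × S¹`, and the condition `dα = π*ω` reads `da = ω`.
The conclusion `α ∧ (dα)^n ≠ 0` everywhere is expressed by full antisymmetrised
evaluation of forms on tangent vectors. -/

/-- Exterior derivative of a 1-form on a vector space. -/
noncomputable def extDer1 {E : Type*} [NormedAddCommGroup E] [NormedSpace ℝ E]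
    (α : E → E → ℝ) (p u v : E) : ℝ :=
  fderiv ℝ (fun q => α q v) p u - fderiv ℝ (fun q => α q u) p v

/-- Evaluation of `α ∧ ω^n` on `2n+1` tangent vectors. -/
noncomputable def oneWedgePow {E : Type*} [NormedAddCommGroup E] [NormedSpace ℝ E]
    (α : E → E → ℝ) (ω : E → E → E → ℝ) (n : ℕ) (p : E) (v : Fin (2 * n + 1) → E) : ℝ :=
  ∑ σ : Equiv.Perm (Fin (2 * n + 1)), ((Equiv.Perm.sign σ : ℤ) : ℝ) *
    α p (v (σ ⟨0, by omega⟩)) *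
    ∏ i : Fin n, ω p (v (σ ⟨2 * i.1 + 1, by have := i.2; omega⟩))
      (v (σ ⟨2 * i.1 + 2, by have := i.2; omega⟩))

/-- Evaluation of `ω^n` on `2n` tangent vectors. -/
noncomputable def powEval {E : Type*} [NormedAddCommGroup E] [NormedSpace ℝ E]
    (ω : E → E → E → ℝ) (n : ℕ) (p : E) (v : Fin (2 * n) → E) : ℝ :=
  ∑ σ : Equiv.Perm (Fin (2 * n)), ((Equiv.Perm.sign σ : ℤ) : ℝ) *
    ∏ i : Fin n, ω p (v (σ ⟨2 * i.1, by have := i.2; omega⟩))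
      (v (σ ⟨2 * i.1 + 1, by have := i.2; omega⟩))

/-! Locally `α = dθ + π*a`, so `dα = π*da = π*ω` kills the fibre direction `∂θ`, while
`α(∂θ) = 1`. Evaluate `α ∧ (dα)ⁿ` on `∂θ` followed by horizontal lifts of vectors `w` with
`ωⁿ(w) ≠ 0`: every permutation that moves `∂θ` into a slot of `dα` contributes zero, and the
remaining ones add up to `α(∂θ) · ωⁿ(w) = ωⁿ(w) ≠ 0`. -/

theorem fderiv_comp_fst {𝕜 E F G : Type*} [NontriviallyNormedField 𝕜]
    [NormedAddCommGroup E] [NormedSpace 𝕜 E] [NormedAddCommGroup F] [NormedSpace 𝕜 F]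
    [NormedAddCommGroup G] [NormedSpace 𝕜 G] (f : E → G) (q : E × F) :
    fderiv 𝕜 (fun r : E × F => f r.1) q = (fderiv 𝕜 f q.1).comp (.fst 𝕜 E F) := by
  by_cases hf : DifferentiableAt 𝕜 f q.1
  · exact (hf.hasFDerivAt.comp q hasFDerivAt_fst).fderiv
  · -- both sides vanish, as `f` is `f ∘ Prod.fst` restricted to the slice `x ↦ (x, q.2)`
    have hslice : ¬ DifferentiableAt 𝕜 (fun r : E × F => f r.1) q := fun h =>
      hf (h.comp (f := fun x => (x, q.2)) q.1
        (differentiableAt_id.prodMk (differentiableAt_const _)))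
    rw [fderiv_zero_of_not_differentiableAt hf, fderiv_zero_of_not_differentiableAt hslice]
    rfl

theorem prod_pairs_eq_zero_of_perm_apply_zero_ne_zero {E R : Type*} [CommMonoidWithZero R]
    (ω : E → E → E → R) (n : ℕ) (p : E) (v : Fin (2 * n + 1) → E)
    (hleft : ∀ x, ω p (v 0) x = 0) (hright : ∀ x, ω p x (v 0) = 0)
    (σ : Equiv.Perm (Fin (2 * n + 1))) (hσ : σ 0 ≠ 0) :
    ∏ i : Fin n, ω p (v (σ ⟨2 * i.1 + 1, by omega⟩)) (v (σ ⟨2 * i.1 + 2, by omega⟩)) = 0 := by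
  set j := σ.symm 0
  have hσj : σ j = 0 := σ.apply_symm_apply 0
  have hj0 : j.val ≠ 0 := fun h => hσ (Fin.ext (b := 0) h ▸ hσj)
  obtain ⟨k, hk | hk⟩ : ∃ k, j.val = 2 * k + 1 ∨ j.val = 2 * k + 2 := ⟨(j.val - 1) / 2, by omega⟩
  · refine Finset.prod_eq_zero (i := ⟨k, by omega⟩) (Finset.mem_univ _) ?_
    rw [show (⟨2 * k + 1, _⟩ : Fin (2 * n + 1)) = j from Fin.ext hk.symm, hσj, hleft]
  · refine Finset.prod_eq_zero (i := ⟨k, by omega⟩) (Finset.mem_univ _) ?_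
    rw [show (⟨2 * k + 2, _⟩ : Fin (2 * n + 1)) = j from Fin.ext hk.symm, hσj, hright]

section

variable {E : Type*} [NormedAddCommGroup E] [NormedSpace ℝ E]

theorem extDer1_zero_left {α : E → E → ℝ} (hα : ∀ q, α q 0 = 0) (p v : E) :
    extDer1 α p 0 v = 0 := by
  simp [extDer1, hα]

theorem extDer1_zero_right {α : E → E → ℝ} (hα : ∀ q, α q 0 = 0) (p u : E) :
    extDer1 α p u 0 = 0 := by
  simp [extDer1, hα]

theorem extDer1_connectionForm (a : E → E → ℝ) (α : E × ℝ → E × ℝ → ℝ)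
    (hα : ∀ p v, α p v = v.2 + a p.1 v.1) (q u v : E × ℝ) :
    extDer1 α q u v = extDer1 a q.1 u.1 v.1 := by
  have hfderiv (w : E × ℝ) :
      fderiv ℝ (fun r => α r w) q = (fderiv ℝ (fun b => a b w.1) q.1).comp (.fst ℝ E ℝ) := by
    simp only [hα, fderiv_const_add]
    exact fderiv_comp_fst (fun b => a b w.1) q
  simp [extDer1, hfderiv]

theorem oneWedgePow_cons_eq_mul_powEval (α : E → E → ℝ) (ω : E → E → E → ℝ) (n : ℕ) (p v₀ : E)
    (w : Fin (2 * n) → E) (hleft : ∀ x, ω p v₀ x = 0) (hright : ∀ x, ω p x v₀ = 0) :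
    oneWedgePow α ω n p (Fin.cons v₀ w) = α p v₀ * powEval ω n p w := by
  unfold oneWedgePow powEval
  rw [← Equiv.sum_comp Equiv.Perm.decomposeFin.symm, Fintype.sum_prod_type,
    Finset.sum_eq_single 0]
  · rw [Finset.mul_sum]
    refine Finset.sum_congr rfl fun e _ => ?_
    have hodd (i : Fin n) : (⟨2 * i.1 + 1, by omega⟩ : Fin (2 * n + 1)) =
        Fin.succ ⟨2 * i.1, by omega⟩ := rfl
    have heven (i : Fin n) : (⟨2 * i.1 + 2, by omega⟩ : Fin (2 * n + 1)) =
        Fin.succ ⟨2 * i.1 + 1, by omega⟩ := rfl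
    simp only [hodd, heven, Fin.zero_eta, Equiv.Perm.decomposeFin_symm_apply_zero,
      Equiv.Perm.decomposeFin_symm_apply_succ, Equiv.swap_self, Equiv.refl_apply,
      Fin.cons_zero, Fin.cons_succ, Equiv.Perm.decomposeFin.symm_sign, if_pos, one_mul]
    ring
  · intro k _ hk
    refine Finset.sum_eq_zero fun e _ => ?_
    rw [prod_pairs_eq_zero_of_perm_apply_zero_ne_zero ω n p _ (by simpa using hleft)
      (by simpa using hright) _ (by simpa using hk), mul_zero]
  · simp

end

theorem stmt6_general (n : ℕ)
    -- the local gauge `a` of the connection form and the symplectic form `ω` on `B`: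
    (a : (Fin (2 * n) → ℝ) → (Fin (2 * n) → ℝ) → ℝ)
    (ω : (Fin (2 * n) → ℝ) → (Fin (2 * n) → ℝ) → (Fin (2 * n) → ℝ) → ℝ)
    (hlin : ∀ b, IsLinearMap ℝ (a b))
    -- `ω^n` is nowhere zero (nondegeneracy of the symplectic form):
    (hsymp : ∀ b, ∃ w : Fin (2 * n) → (Fin (2 * n) → ℝ), powEval ω n b w ≠ 0)
    -- the curvature condition `dα = π*ω`, i.e. `da = ω` in the local gauge:
    (hcurv : ∀ b u v, extDer1 a b u v = ω b u v) :
    -- the connection 1-form `α = dθ + π*a` is a contact form on `M`: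
    ∀ α : ((Fin (2 * n) → ℝ) × ℝ) → ((Fin (2 * n) → ℝ) × ℝ) → ℝ,
      (∀ p v, α p v = v.2 + a p.1 v.1) →
      ∀ p, ∃ v : Fin (2 * n + 1) → (Fin (2 * n) → ℝ) × ℝ,
        oneWedgePow α (extDer1 α) n p v ≠ 0 := by
  intro α hα p
  obtain ⟨w, hw⟩ := hsymp p.1
  have ha0 (b) : a b 0 = 0 := (hlin b).map_zero
  refine ⟨Fin.cons (0, 1) fun j => (w j, 0), ?_⟩
  rw [oneWedgePow_cons_eq_mul_powEval _ _ _ _ _ _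
    (fun x => by simp [extDer1_connectionForm a α hα, extDer1_zero_left ha0])
    (fun x => by simp [extDer1_connectionForm a α hα, extDer1_zero_right ha0])]
  simpa [hα, ha0, powEval, extDer1_connectionForm a α hα, hcurv] using hw

theorem stmt6 (n : ℕ) (hn : 1 ≤ n)
    -- the local gauge `a` of the connection form and the symplectic form `ω` on `B`:
    (a : (Fin (2 * n) → ℝ) → (Fin (2 * n) → ℝ) → ℝ)
    (ω : (Fin (2 * n) → ℝ) → (Fin (2 * n) → ℝ) → (Fin (2 * n) → ℝ) → ℝ)
    (hsm : ContDiff ℝ (⊤ : ℕ∞) fun q : (Fin (2 * n) → ℝ) × (Fin (2 * n) → ℝ) =>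
      a q.1 q.2)
    (hlin : ∀ b, IsLinearMap ℝ (a b))
    (hskew : ∀ b u v, ω b u v = -ω b v u)
    -- `ω` is closed:
    (hclosed : ∀ b u v w,
      fderiv ℝ (fun q => ω q v w) b u - fderiv ℝ (fun q => ω q u w) b v +
        fderiv ℝ (fun q => ω q u v) b w = 0)
    -- `ω^n` is nowhere zero (nondegeneracy of the symplectic form):
    (hsymp : ∀ b, ∃ w : Fin (2 * n) → (Fin (2 * n) → ℝ), powEval ω n b w ≠ 0)
    -- the curvature condition `dα = π*ω`, i.e. `da = ω` in the local gauge: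
    (hcurv : ∀ b u v, extDer1 a b u v = ω b u v) :
    -- the connection 1-form `α = dθ + π*a` is a contact form on `M`:
    ∀ α : ((Fin (2 * n) → ℝ) × ℝ) → ((Fin (2 * n) → ℝ) × ℝ) → ℝ,
      (∀ p v, α p v = v.2 + a p.1 v.1) →
      ∀ p, ∃ v : Fin (2 * n + 1) → (Fin (2 * n) → ℝ) × ℝ,
        oneWedgePow α (extDer1 α) n p v ≠ 0 :=
  stmt6_general n a ω hlin hsymp hcurv
end
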